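/- For every integer n ≥ 1 and every real number r ≥ 1, the sum ∑_{i=1}^n i^r is at least (r/(r+1)) · n^r (n+1)^r / ((n+1)^r − n^r). -/

import Mathlib

/-!
Put `g(t) = r/(r+1) · tʳ(t+1)ʳ / ((t+1)ʳ - tʳ)`. Since `g(0) = 0`, it suffices that
`g(t+1) - g(t) ≤ (t+1)ʳ` for `t ≥ 0`. With `a, b, c = tʳ, (t+1)ʳ, (t+2)ʳ` this increment inequality
is equivalent to `(r+1) b² ≤ b(a+c) + (r-1) ac`, i.e., with `x = 1/(t+1)`, to
`r + 1 ≤ (1+x)ʳ + (1-x)ʳ + (r-1)(1-x²)ʳ`. The right-hand side equals `r + 1` at `x = 0` and is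
increasing on `[0, 1]`: its derivative is nonnegative because
`(1-x)^(-s) - (1+x)^(-s) ≥ 2sx` for `s = r - 1 ≥ 0`, which is `2 sinh t ≥ 2t` in disguise.
-/

open Real Finset

lemma two_mul_le_log_one_add_sub_log_one_sub {x : ℝ} (hx₀ : 0 ≤ x) (hx₁ : x < 1) :
    2 * x ≤ log (1 + x) - log (1 - x) := by
  have hsum := hasSum_log_sub_log_of_abs_lt_one (abs_lt.2 ⟨by linarith, hx₁⟩)
  simpa using le_hasSum hsum 0 fun k _ ↦ by positivity

lemma two_mul_mul_le_one_sub_rpow_neg_sub_one_add_rpow_neg {s x : ℝ} (hs : 0 ≤ s)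
    (hx₀ : 0 ≤ x) (hx₁ : x < 1) :
    2 * s * x ≤ (1 - x) ^ (-s) - (1 + x) ^ (-s) := by
  have hxp : 0 < 1 + x := by linarith
  have hxm : 0 < 1 - x := by linarith
  set L := -log (1 - x)
  set M := log (1 + x)
  have hM : 0 ≤ M := log_nonneg (by linarith)
  have hML : M ≤ L := by
    have : log ((1 + x) * (1 - x)) ≤ 0 := log_nonpos (by positivity) (by nlinarith)
    rw [log_mul hxp.ne' hxm.ne'] at this
    linarith
  have hLM : 2 * x ≤ L + M := by linarith [two_mul_le_log_one_add_sub_log_one_sub hx₀ hx₁]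
  set t := s * (L + M) / 2
  have ht : 0 ≤ t := div_nonneg (mul_nonneg hs (by linarith)) zero_le_two
  have hsinh : 2 * t ≤ exp t - exp (-t) := by
    have := self_le_sinh_iff.2 ht
    rw [sinh_eq] at this
    linarith
  rw [rpow_def_of_pos hxm, rpow_def_of_pos hxp]
  calc 2 * s * x ≤ 2 * t := by simp only [t]; nlinarith
    _ ≤ exp t - exp (-t) := hsinh
    _ ≤ exp (s * (L - M) / 2) * (exp t - exp (-t)) :=
        le_mul_of_one_le_left (by linarith) (one_le_exp (by nlinarith))
    _ = exp (log (1 - x) * -s) - exp (log (1 + x) * -s) := by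
        rw [mul_sub, ← exp_add, ← exp_add]
        simp only [t, L, M]
        ring_nf

lemma two_mul_mul_mul_one_sub_sq_rpow_le {s x : ℝ} (hs : 0 ≤ s) (hx₀ : 0 ≤ x) (hx₁ : x < 1) :
    2 * s * x * (1 - x ^ 2) ^ s ≤ (1 + x) ^ s - (1 - x) ^ s := by
  have hp : 0 < (1 + x) ^ s := rpow_pos_of_pos (by linarith) s
  have hq : 0 < (1 - x) ^ s := rpow_pos_of_pos (by linarith) s
  have hpq : (1 - x ^ 2) ^ s = (1 + x) ^ s * (1 - x) ^ s := by
    rw [← mul_rpow (by linarith) (by linarith)]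
    ring_nf
  have h := two_mul_mul_le_one_sub_rpow_neg_sub_one_add_rpow_neg hs hx₀ hx₁
  rw [rpow_neg (by linarith), rpow_neg (by linarith)] at h
  calc 2 * s * x * (1 - x ^ 2) ^ s
      ≤ (((1 - x) ^ s)⁻¹ - ((1 + x) ^ s)⁻¹) * ((1 + x) ^ s * (1 - x) ^ s) := by
        rw [hpq]
        exact mul_le_mul_of_nonneg_right h (by positivity)
    _ = (1 + x) ^ s - (1 - x) ^ s := by
        field_simp

lemma monotoneOn_one_add_rpow_add_one_sub_rpow_add_mul_one_sub_sq_rpow {r : ℝ} (hr : 1 ≤ r) :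
    MonotoneOn (fun x : ℝ ↦ (1 + x) ^ r + (1 - x) ^ r + (r - 1) * (1 - x ^ 2) ^ r)
      (Set.Icc 0 1) := by
  have hr₀ : 0 ≤ r := by linarith
  refine monotoneOn_of_hasDerivWithinAt_nonneg (convex_Icc 0 1)
    (f' := fun x ↦
      r * ((1 + x) ^ (r - 1) - (1 - x) ^ (r - 1) - 2 * (r - 1) * x * (1 - x ^ 2) ^ (r - 1)))
    ?_ ?_ ?_
  · exact ((ContinuousOn.rpow_const (by fun_prop) fun _ _ ↦ Or.inr hr₀).add
      (ContinuousOn.rpow_const (by fun_prop) fun _ _ ↦ Or.inr hr₀)).add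
      (continuousOn_const.mul (ContinuousOn.rpow_const (by fun_prop) fun _ _ ↦ Or.inr hr₀))
  all_goals rw [interior_Icc]
  · rintro x ⟨hx₀, hx₁⟩
    have hx₁' : 0 < 1 - x ^ 2 := by nlinarith
    refine HasDerivAt.hasDerivWithinAt ?_
    refine ((((hasDerivAt_id' x).const_add 1).rpow_const (Or.inl (by linarith))).add
      (((hasDerivAt_id' x).const_sub 1).rpow_const (Or.inl (by linarith)))).add
      ((((hasDerivAt_pow 2 x).const_sub 1).rpow_const (Or.inl hx₁'.ne')).const_mul (r - 1))
      |>.congr_deriv ?_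
    ring
  · rintro x ⟨hx₀, hx₁⟩
    have := two_mul_mul_mul_one_sub_sq_rpow_le (s := r - 1) (by linarith) hx₀.le hx₁
    exact mul_nonneg hr₀ (by linarith)

lemma add_one_le_one_add_rpow_add_one_sub_rpow_add_mul_one_sub_sq_rpow {r x : ℝ} (hr : 1 ≤ r)
    (hx₀ : 0 ≤ x) (hx₁ : x ≤ 1) :
    r + 1 ≤ (1 + x) ^ r + (1 - x) ^ r + (r - 1) * (1 - x ^ 2) ^ r := by
  calc r + 1 = (1 + 0) ^ r + (1 - 0) ^ r + (r - 1) * (1 - 0 ^ 2) ^ r := by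
        rw [zero_pow two_ne_zero, add_zero, sub_zero, one_rpow]
        ring
    _ ≤ _ := monotoneOn_one_add_rpow_add_one_sub_rpow_add_mul_one_sub_sq_rpow hr
        (Set.left_mem_Icc.2 zero_le_one) ⟨hx₀, hx₁⟩ hx₀

lemma add_one_mul_rpow_add_one_sq_le {r t : ℝ} (hr : 1 ≤ r) (ht : 0 ≤ t) :
    (r + 1) * ((t + 1) ^ r) ^ 2 ≤
      (t + 1) ^ r * (t ^ r + (t + 2) ^ r) + (r - 1) * (t ^ r * (t + 2) ^ r) := by
  have ht₁ : 0 < t + 1 := by linarith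
  set x := (t + 1)⁻¹
  have hxt : x * (t + 1) = 1 := inv_mul_cancel₀ ht₁.ne'
  have hx₀ : 0 ≤ x := by positivity
  have hx₁ : x ≤ 1 := inv_le_one_of_one_le₀ (by linarith)
  have hu : (1 + x) ^ r * (t + 1) ^ r = (t + 2) ^ r := by
    rw [← mul_rpow (by positivity) ht₁.le]
    congr 1
    linear_combination hxt
  have hv : (1 - x) ^ r * (t + 1) ^ r = t ^ r := by
    rw [← mul_rpow (by linarith) ht₁.le]
    congr 1
    linear_combination -hxt
  have hw : (1 - x ^ 2) ^ r * ((t + 1) ^ r) ^ 2 = t ^ r * (t + 2) ^ r := by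
    rw [show 1 - x ^ 2 = (1 + x) * (1 - x) by ring, mul_rpow (by positivity) (by linarith),
      ← hu, ← hv]
    ring
  have := mul_le_mul_of_nonneg_right
    (add_one_le_one_add_rpow_add_one_sub_rpow_add_mul_one_sub_sq_rpow hr hx₀ hx₁)
    (sq_nonneg ((t + 1) ^ r))
  calc (r + 1) * ((t + 1) ^ r) ^ 2
      ≤ ((1 + x) ^ r + (1 - x) ^ r + (r - 1) * (1 - x ^ 2) ^ r) * ((t + 1) ^ r) ^ 2 := this
    _ = _ := by rw [← hw, ← hu, ← hv]; ring

noncomputable def levinSteckinBound (r t : ℝ) : ℝ :=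
  r / (r + 1) * (t ^ r * (t + 1) ^ r / ((t + 1) ^ r - t ^ r))

lemma levinSteckinBound_zero {r : ℝ} (hr : r ≠ 0) : levinSteckinBound r 0 = 0 := by
  simp [levinSteckinBound, zero_rpow hr]

lemma levinSteckinBound_add_one_le {r t : ℝ} (hr : 1 ≤ r) (ht : 0 ≤ t) :
    levinSteckinBound r (t + 1) ≤ levinSteckinBound r t + (t + 1) ^ r := by
  have hr₀ : 0 < r := by linarith
  have key := add_one_mul_rpow_add_one_sq_le hr ht
  rw [levinSteckinBound, levinSteckinBound, show t + 1 + 1 = t + 2 by ring]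
  set a := t ^ r
  set b := (t + 1) ^ r
  set c := (t + 2) ^ r
  have ha : 0 ≤ a := rpow_nonneg ht r
  have hb : 0 < b := rpow_pos_of_pos (by linarith) r
  have hab : a < b := rpow_lt_rpow ht (by linarith) hr₀
  have hbc : b < c := rpow_lt_rpow (by linarith) (by linarith) hr₀
  have hcb : 0 < c - b := by linarith
  have hba : 0 < b - a := by linarith
  rw [← sub_le_iff_le_add', div_mul_div_comm, div_mul_div_comm, div_sub_div _ _ (by positivity)
    (by positivity), div_le_iff₀ (by positivity)]
  nlinarith [mul_le_mul_of_nonneg_left key hb.le]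

theorem levin_steckin_high (n : ℕ) (r : ℝ) (hr : 1 ≤ r) :
    ∑ i ∈ Finset.Icc 1 n, (i : ℝ) ^ r ≥
      (r / (r + 1)) * ((n : ℝ) ^ r * (n + 1 : ℝ) ^ r / ((n + 1 : ℝ) ^ r - (n : ℝ) ^ r)) := by
  change levinSteckinBound r n ≤ _
  induction n with
  | zero => simp [levinSteckinBound_zero (by linarith : r ≠ 0)]
  | succ n ih =>
    rw [sum_Icc_succ_top (by omega), Nat.cast_succ]
    linarith [levinSteckinBound_add_one_le hr n.cast_nonneg]
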